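/- arXiv:1806.10482 — 3 statements merged into one kernel-verified Lean document; each statement's English description precedes it below -/
import Mathlib

section
/- The following are equivalent: (i) L′ = Im(D) + V, that is, every f ∈ L′ can be written as f = D𝐯 + μ with 𝐯 ∈ 𝐖_D and μ ∈ V; (ii) the seminorm ‖·‖_{W_G} and the graph norm ‖·‖_{W_G,𝒢} are equivalent norms on W_G, i.e. there exists C > 0 such that ‖u‖_{W_G,𝒢} ≤ C ‖u‖_{W_G} for all u ∈ W_G. -/
open NormedSpace Filter Topology

noncomputable section

variable {L Lv : Type*} [NormedAddCommGroup L] [NormedSpace ℝ L]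
  [NormedAddCommGroup Lv] [NormedSpace ℝ Lv]

/-- The seminorm `|u|_{L,V} = sup_{μ ∈ V \ {0}} |⟨μ,u⟩| / ‖μ‖` (equal to `0` when `V = {0}`,
since `sSup ∅ = 0` in `ℝ`). -/
noncomputable def semV (V : Submodule ℝ (StrongDual ℝ L)) (u : L) : ℝ :=
  sSup ((fun μ : StrongDual ℝ L => |μ u| / ‖μ‖) '' {μ : StrongDual ℝ L | μ ∈ V ∧ μ ≠ 0})

/-- `IsWDpair W_G G φ w` says that `φ ∈ 𝐖_D` with `D φ = w`, i.e. the abstract Stokes formula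
`⟨φ, G u⟩ + ⟨w, u⟩ = 0` holds for all `u ∈ W_G`. -/
def IsWDpair (WG : Submodule ℝ L) (G : ↥WG →ₗ[ℝ] Lv) (φ : StrongDual ℝ Lv) (w : StrongDual ℝ L) : Prop :=
  ∀ u : ↥WG, φ (G u) + w (u : L) = 0

/-- A gradient discretisation `𝒟 = (X_𝒟, P_𝒟, G_𝒟)`: a finite-dimensional real vector space
`X`, a function reconstruction `P : X → L` and a gradient reconstruction `Gd : X → Lv`, such
that `v ↦ (|P v|_{L,V}^p + ‖Gd v‖^p)^{1/p}` is a norm on `X` (definiteness is the only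
non-automatic condition). -/
structure GradDisc (L Lv : Type*) [NormedAddCommGroup L] [NormedSpace ℝ L]
    [NormedAddCommGroup Lv] [NormedSpace ℝ Lv]
    (V : Submodule ℝ (StrongDual ℝ L)) (p : ℝ) where
  X : Type
  [instAddCommGroup : AddCommGroup X]
  [instModule : Module ℝ X]
  [instFin : FiniteDimensional ℝ X]
  P : X →ₗ[ℝ] L
  Gd : X →ₗ[ℝ] Lv
  dnorm_definite : ∀ v : X, (semV V (P v) ^ p + ‖Gd v‖ ^ p) ^ (1 / p) = 0 → v = 0

attribute [instance] GradDisc.instAddCommGroup GradDisc.instModule GradDisc.instFin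

namespace GradDisc

variable {V : Submodule ℝ (StrongDual ℝ L)} {p : ℝ}

/-- The discrete norm `‖v‖_𝒟 = (|P_𝒟 v|_{L,V}^p + ‖G_𝒟 v‖_Lv^p)^{1/p}`. -/
noncomputable def dnorm (D : GradDisc L Lv V p) (v : D.X) : ℝ :=
  (semV V (D.P v) ^ p + ‖D.Gd v‖ ^ p) ^ (1 / p)

/-- `C_𝒟 = max_{v ≠ 0} ‖P_𝒟 v‖_L / ‖v‖_𝒟`. -/
noncomputable def CD (D : GradDisc L Lv V p) : ℝ :=
  sSup ((fun v : D.X => ‖D.P v‖ / D.dnorm v) '' {v : D.X | v ≠ 0})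

/-- `W_𝒟(φ) = sup_{u ≠ 0} |⟨φ, G_𝒟 u⟩ + ⟨D φ, P_𝒟 u⟩| / ‖u‖_𝒟`, where `w = D φ`. -/
noncomputable def WDdef (D : GradDisc L Lv V p) (φ : StrongDual ℝ Lv) (w : StrongDual ℝ L) : ℝ :=
  sSup ((fun u : D.X => |φ (D.Gd u) + w (D.P u)| / D.dnorm u) '' {u : D.X | u ≠ 0})

/-- `S_𝒟(φ) = min_v (‖P_𝒟 v − φ‖_L + ‖G_𝒟 v − G φ‖_Lv)`, where `gφ = G φ`. -/
noncomputable def SDdef (D : GradDisc L Lv V p) (φ : L) (gφ : Lv) : ℝ :=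
  sInf (Set.range fun v : D.X => ‖D.P v - φ‖ + ‖D.Gd v - gφ‖)

end GradDisc

/-- Coercivity of a sequence of gradient discretisations: `sup_m C_{𝒟_m} < ∞`. -/
def Coercive {V : Submodule ℝ (StrongDual ℝ L)} {p : ℝ} (D : ℕ → GradDisc L Lv V p) : Prop :=
  ∃ C : ℝ, ∀ m : ℕ, (D m).CD ≤ C

/-- Limit-conformity: `W_{𝒟_m}(φ) → 0` for every `φ ∈ 𝐖_D` (with `w = D φ`). -/
def LimitConforming (WG : Submodule ℝ L) (G : ↥WG →ₗ[ℝ] Lv)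
    {V : Submodule ℝ (StrongDual ℝ L)} {p : ℝ} (D : ℕ → GradDisc L Lv V p) : Prop :=
  ∀ (φ : StrongDual ℝ Lv) (w : StrongDual ℝ L), IsWDpair WG G φ w →
    Filter.Tendsto (fun m => (D m).WDdef φ w) Filter.atTop (𝓝 0)

/-- Consistency: `S_{𝒟_m}(φ) → 0` for every `φ ∈ W_G`. -/
def Consistent (WG : Submodule ℝ L) (G : ↥WG →ₗ[ℝ] Lv)
    {V : Submodule ℝ (StrongDual ℝ L)} {p : ℝ} (D : ℕ → GradDisc L Lv V p) : Prop :=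
  ∀ u : ↥WG, Filter.Tendsto (fun m => (D m).SDdef (u : L) (G u)) Filter.atTop (𝓝 0)

/-- Compactness: bounded discrete sequences have relatively compact reconstructions in `L`. -/
def CompactSeq {V : Submodule ℝ (StrongDual ℝ L)} {p : ℝ} (D : ℕ → GradDisc L Lv V p) : Prop :=
  ∀ u : (m : ℕ) → (D m).X, (∃ C : ℝ, ∀ m : ℕ, (D m).dnorm (u m) ≤ C) →
    IsCompact (closure (Set.range fun m => (D m).P (u m)))


/-!
Both conditions are equivalent to `‖u‖_L ≤ K (|u|_{L,V} + ‖G u‖)` on `W_G`. If `f = D φ + μ`,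
then `|f u| ≤ ‖φ‖ ‖G u‖ + ‖μ‖ |u|_{L,V}`, so the family `u / (|u|_{L,V} + ‖G u‖)` is weakly bounded
and the uniform boundedness principle bounds it in norm. Conversely, the norm bound lets
Hahn–Banach extend `(G u, u) ↦ f u` to `Lv × L` under the seminorm `c (‖y‖ + |x|_{L,V})`. The two
components give `φ ∈ Lv′` and `μ ∈ L′` with `f = D (-φ) + μ` on `W_G`, and `μ` vanishes wherever
all of `V` vanishes, so `μ ∈ V` by the bipolar theorem (`V` closed, `L` reflexive).
-/

open scoped NNReal

section Lp

variable {p a b : ℝ}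

lemma le_rpow_add_rpow_left (hp : 0 < p) (ha : 0 ≤ a) (hb : 0 ≤ b) :
    a ≤ (a ^ p + b ^ p) ^ (1 / p) :=
  calc a = (a ^ p) ^ (1 / p) := by rw [← Real.rpow_mul ha, mul_one_div_cancel hp.ne', Real.rpow_one]
    _ ≤ (a ^ p + b ^ p) ^ (1 / p) := by gcongr; exact le_add_of_nonneg_right (by positivity)

lemma le_rpow_add_rpow_right (hp : 0 < p) (ha : 0 ≤ a) (hb : 0 ≤ b) :
    b ≤ (a ^ p + b ^ p) ^ (1 / p) :=
  add_comm (a ^ p) (b ^ p) ▸ le_rpow_add_rpow_left hp hb ha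

lemma add_le_two_mul_rpow_add_rpow (hp : 0 < p) (ha : 0 ≤ a) (hb : 0 ≤ b) :
    a + b ≤ 2 * (a ^ p + b ^ p) ^ (1 / p) := by
  linarith [le_rpow_add_rpow_left hp ha hb, le_rpow_add_rpow_right hp ha hb]

lemma exists_rpow_add_rpow_le_iff {ι : Type*} (hp : 1 ≤ p) {a s g : ι → ℝ}
    (ha : ∀ i, 0 ≤ a i) (hs : ∀ i, 0 ≤ s i) (hg : ∀ i, 0 ≤ g i) :
    (∃ C : ℝ, 0 < C ∧ ∀ i, (a i ^ p + g i ^ p) ^ (1 / p) ≤ C * (s i ^ p + g i ^ p) ^ (1 / p)) ↔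
      ∃ K : ℝ≥0, ∀ i, a i ≤ K * (s i + g i) := by
  have hp0 : 0 < p := one_pos.trans_le hp
  constructor
  · rintro ⟨C, hC, h⟩
    refine ⟨C.toNNReal, fun i => ?_⟩
    calc a i ≤ (a i ^ p + g i ^ p) ^ (1 / p) := le_rpow_add_rpow_left hp0 (ha i) (hg i)
      _ ≤ C * (s i ^ p + g i ^ p) ^ (1 / p) := h i
      _ ≤ C * (s i + g i) := by gcongr; exact Real.rpow_add_rpow_le_add (hs i) (hg i) hp
      _ = C.toNNReal * (s i + g i) := by rw [Real.coe_toNNReal _ hC.le]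
  · rintro ⟨K, h⟩
    refine ⟨2 * (K + 1), by positivity, fun i => ?_⟩
    calc (a i ^ p + g i ^ p) ^ (1 / p) ≤ a i + g i := Real.rpow_add_rpow_le_add (ha i) (hg i) hp
      _ ≤ (K + 1) * (s i + g i) := by nlinarith [h i, hs i, hg i, K.coe_nonneg]
      _ ≤ (K + 1) * (2 * (s i ^ p + g i ^ p) ^ (1 / p)) := by
        gcongr; exact add_le_two_mul_rpow_add_rpow hp0 (hs i) (hg i)
      _ = 2 * (K + 1) * (s i ^ p + g i ^ p) ^ (1 / p) := by ring

end Lp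

section Dual

variable {E F : Type*} [NormedAddCommGroup E] [NormedSpace ℝ E] [NormedAddCommGroup F]
  [NormedSpace ℝ F]

lemma exists_norm_le_mul_of_forall_dual {ι : Type*} (x : ι → E) {N : ι → ℝ}
    (hN : ∀ i, 0 ≤ N i) (h : ∀ f : StrongDual ℝ E, ∃ C, ∀ i, |f (x i)| ≤ C * N i) :
    ∃ K : ℝ≥0, ∀ i, ‖x i‖ ≤ K * N i := by
  let g : ι → StrongDual ℝ (StrongDual ℝ E) := fun i => (N i)⁻¹ • inclusionInDoubleDual ℝ E (x i)
  have hg : ∀ f i, ‖g i f‖ = (N i)⁻¹ * |f (x i)| := fun f i => by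
    simp [g, abs_of_nonneg (hN i)]
  obtain ⟨C', hC'⟩ := banach_steinhaus fun f => by
    obtain ⟨C, hC⟩ := h f
    refine ⟨|C|, fun i => ?_⟩
    calc ‖g i f‖ = (N i)⁻¹ * |f (x i)| := hg f i
      _ ≤ (N i)⁻¹ * (|C| * N i) :=
        mul_le_mul_of_nonneg_left ((hC i).trans (by gcongr; exacts [hN i, le_abs_self C]))
          (inv_nonneg.2 (hN i))
      _ = |C| * (N i * (N i)⁻¹) := by ring
      _ ≤ |C| := mul_le_of_le_one_right (abs_nonneg C) mul_inv_le_one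
  refine ⟨C'.toNNReal, fun i => norm_le_dual_bound ℝ _ (by positivity [hN i]) fun f => ?_⟩
  rcases (hN i).eq_or_lt with hNi | hNi
  · obtain ⟨C, hC⟩ := h f
    simpa [← hNi] using hC i
  · calc ‖f (x i)‖ = N i * ‖g i f‖ := by rw [hg, mul_inv_cancel_left₀ hNi.ne', Real.norm_eq_abs]
      _ ≤ N i * (‖g i‖ * ‖f‖) := by gcongr; exact (g i).le_opNorm f
      _ ≤ N i * (C'.toNNReal * ‖f‖) := by gcongr; exact (hC' i).trans (Real.le_coe_toNNReal C')
      _ = C'.toNNReal * N i * ‖f‖ := by ring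

lemma exists_eq_comp_add_of_abs_le {W : Submodule ℝ E} (G : W →ₗ[ℝ] F) (q : Seminorm ℝ E)
    (hq : ∀ x, q x ≤ ‖x‖) (f : StrongDual ℝ E) (c : ℝ≥0)
    (hf : ∀ u : W, |f u| ≤ c * (‖G u‖ + q u)) :
    ∃ (φ : StrongDual ℝ F) (μ : StrongDual ℝ E),
      (∀ x, |μ x| ≤ c * q x) ∧ ∀ u : W, f u = φ (G u) + μ u := by
  let N : Seminorm ℝ (F × E) :=
    c • ((normSeminorm ℝ F).comp (LinearMap.fst ℝ F E) + q.comp (LinearMap.snd ℝ F E))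
  have hN : ∀ z, N z = c * (‖z.1‖ + q z.2) := fun z => rfl
  let S := LinearMap.range (G.prod W.subtype)
  obtain ⟨g, hgS, hgN⟩ := Module.Dual.exists_extension_of_le_seminorm_real S
    (f.toLinearMap ∘ₗ LinearMap.snd ℝ F E ∘ₗ S.subtype) (p := N) (by
      rintro ⟨_, u, rfl⟩
      exact (le_abs_self _).trans (hf u))
  have hφ : ∀ y, ‖(g ∘ₗ LinearMap.inl ℝ F E) y‖ ≤ c * ‖y‖ := fun y => by
    simpa [hN] using hgN (y, 0)
  have hμ : ∀ x, |(g ∘ₗ LinearMap.inr ℝ F E) x| ≤ c * q x := fun x => by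
    simpa [hN] using hgN (0, x)
  refine ⟨(g ∘ₗ LinearMap.inl ℝ F E).mkContinuous c hφ,
    (g ∘ₗ LinearMap.inr ℝ F E).mkContinuous c fun x => (hμ x).trans (by gcongr; exact hq x),
    hμ, fun u => ?_⟩
  have hu := hgS ⟨(G u, u), u, rfl⟩
  change f u = g (G u, 0) + g (0, u)
  rw [← map_add, Prod.mk_add_mk, add_zero, zero_add]
  simpa using hu.symm

lemma mem_of_forall_apply_eq_zero (hrefl : Function.Surjective (inclusionInDoubleDual ℝ E))
    {V : Submodule ℝ (StrongDual ℝ E)} (hV : IsClosed (V : Set (StrongDual ℝ E)))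
    {μ : StrongDual ℝ E} (h : ∀ x, (∀ ν ∈ V, ν x = 0) → μ x = 0) : μ ∈ V := by
  by_contra hμ
  obtain ⟨Λ, t, hΛV, hΛμ⟩ := geometric_hahn_banach_closed_point V.convex hV hμ
  have hΛ : ∀ ν ∈ V, Λ ν = 0 := fun ν hν => by
    by_contra hne
    have := hΛV (((t + 1) / Λ ν) • ν) (V.smul_mem _ hν)
    rw [map_smul, smul_eq_mul, div_mul_cancel₀ _ hne] at this
    linarith
  obtain ⟨x, rfl⟩ := hrefl Λ
  have ht : 0 < t := by simpa using hΛV 0 V.zero_mem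
  have := h x hΛ
  simp only [dual_def] at hΛμ
  linarith

end Dual

section SemV

variable {V : Submodule ℝ (StrongDual ℝ L)}

lemma semV_nonneg (u : L) : 0 ≤ semV V u :=
  Real.sSup_nonneg (by rintro _ ⟨μ, -, rfl⟩; positivity)

lemma semV_le {u : L} {a : ℝ} (ha : 0 ≤ a) (h : ∀ μ ∈ V, |μ u| ≤ a * ‖μ‖) : semV V u ≤ a :=
  Real.sSup_le (by
    rintro _ ⟨μ, ⟨hμ, hμ0⟩, rfl⟩
    rw [div_le_iff₀ (norm_pos_iff.mpr hμ0)]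
    exact h μ hμ) ha

lemma semV_le_norm (u : L) : semV V u ≤ ‖u‖ :=
  semV_le (norm_nonneg u) fun μ _ => by rw [mul_comm, ← Real.norm_eq_abs]; exact μ.le_opNorm u

lemma abs_apply_le_norm_mul_semV {u : L} {μ : StrongDual ℝ L} (hμ : μ ∈ V) :
    |μ u| ≤ ‖μ‖ * semV V u := by
  rcases eq_or_ne μ 0 with rfl | hμ0
  · simp
  have hbdd : BddAbove ((fun ν : StrongDual ℝ L => |ν u| / ‖ν‖) '' {ν | ν ∈ V ∧ ν ≠ 0}) :=
    ⟨‖u‖, by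
      rintro _ ⟨ν, ⟨-, hν0⟩, rfl⟩
      rw [div_le_iff₀ (norm_pos_iff.mpr hν0), mul_comm, ← Real.norm_eq_abs]
      exact ν.le_opNorm u⟩
  have := le_csSup hbdd ⟨μ, ⟨hμ, hμ0⟩, rfl⟩
  rwa [div_le_iff₀ (norm_pos_iff.mpr hμ0), mul_comm] at this

variable (V) in
def semVSeminorm : Seminorm ℝ L :=
  Seminorm.ofSMulLE (semV V) (le_antisymm (semV_le le_rfl (by simp)) (semV_nonneg 0))
    (fun x y => semV_le (add_nonneg (semV_nonneg x) (semV_nonneg y)) fun μ hμ => by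
      rw [map_add]
      linarith [abs_add_le (μ x) (μ y), abs_apply_le_norm_mul_semV (u := x) hμ,
        abs_apply_le_norm_mul_semV (u := y) hμ])
    (fun r x => semV_le (by positivity [semV_nonneg (V := V) x]) fun μ hμ => by
      rw [map_smul, smul_eq_mul, abs_mul, ← Real.norm_eq_abs, mul_assoc]
      gcongr
      exact abs_apply_le_norm_mul_semV hμ |>.trans_eq (mul_comm _ _))

lemma semVSeminorm_apply (u : L) : semVSeminorm V u = semV V u := rfl

end SemV

section Decomposition

variable {WG : Submodule ℝ L} {G : ↥WG →ₗ[ℝ] Lv} {V : Submodule ℝ (StrongDual ℝ L)}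

lemma exists_norm_le_of_forall_eq_add
    (H : ∀ f : StrongDual ℝ L, ∃ (φ : StrongDual ℝ Lv) (w μ : StrongDual ℝ L),
      IsWDpair WG G φ w ∧ μ ∈ V ∧ f = w + μ) :
    ∃ K : ℝ≥0, ∀ u : WG, ‖(u : L)‖ ≤ K * (semV V u + ‖G u‖) := by
  refine exists_norm_le_mul_of_forall_dual (fun u : WG => (u : L))
    (fun u => add_nonneg (semV_nonneg _) (norm_nonneg _)) fun f => ?_
  obtain ⟨φ, w, μ, hφw, hμ, rfl⟩ := H f
  refine ⟨‖μ‖ + ‖φ‖, fun u => ?_⟩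
  have hw : w u = -φ (G u) := eq_neg_of_add_eq_zero_right (hφw u)
  have hφ : |φ (G u)| ≤ ‖φ‖ * ‖G u‖ := by rw [← Real.norm_eq_abs]; exact φ.le_opNorm _
  have hμu := abs_apply_le_norm_mul_semV (u := (u : L)) hμ
  calc |(w + μ) u| = |μ u - φ (G u)| := by rw [add_apply, hw]; ring_nf
    _ ≤ |μ u| + |φ (G u)| := abs_sub _ _
    _ ≤ (‖μ‖ + ‖φ‖) * (semV V u + ‖G u‖) := by
      nlinarith [semV_nonneg (V := V) (u : L), norm_nonneg (G u), norm_nonneg μ, norm_nonneg φ]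

lemma forall_eq_add_of_norm_le (hreflL : Function.Surjective (inclusionInDoubleDual ℝ L))
    (hV : IsClosed (V : Set (StrongDual ℝ L))) {K : ℝ≥0}
    (hK : ∀ u : WG, ‖(u : L)‖ ≤ K * (semV V u + ‖G u‖)) (f : StrongDual ℝ L) :
    ∃ (φ : StrongDual ℝ Lv) (w μ : StrongDual ℝ L), IsWDpair WG G φ w ∧ μ ∈ V ∧ f = w + μ := by
  obtain ⟨φ, μ, hμ, hf⟩ := exists_eq_comp_add_of_abs_le G (semVSeminorm V) semV_le_norm f
    (‖f‖₊ * K) fun u =>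
      calc |f u| ≤ ‖f‖ * ‖(u : L)‖ := by rw [← Real.norm_eq_abs]; exact f.le_opNorm _
        _ ≤ ‖f‖ * (K * (semV V u + ‖G u‖)) := by gcongr; exact hK u
        _ = (‖f‖₊ * K : ℝ≥0) * (‖G u‖ + semVSeminorm V u) := by
          rw [semVSeminorm_apply]; push_cast; ring
  refine ⟨-φ, f - μ, μ, fun u => ?_, mem_of_forall_apply_eq_zero hreflL hV fun x hx => ?_,
    (sub_add_cancel f μ).symm⟩
  · simp only [neg_apply, sub_apply, hf u]
    ring
  · have hx0 : semV V x ≤ 0 := semV_le le_rfl fun ν hν => by simp [hx ν hν]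
    have := hμ x
    rw [semVSeminorm_apply] at this
    exact abs_nonpos_iff.mp (this.trans (mul_nonpos_of_nonneg_of_nonpos (by positivity) hx0))

end Decomposition

theorem surjectivity_of_D_iff_norm_equivalence_general
    (hreflL : Function.Surjective ⇑(inclusionInDoubleDual ℝ L))
    (WG : Submodule ℝ L)
    (G : ↥WG →ₗ[ℝ] Lv)
    (p : ℝ) (hp : 1 < p)
    (V : Submodule ℝ (StrongDual ℝ L)) (hVclosed : IsClosed (V : Set (StrongDual ℝ L))) :
    (∀ f : StrongDual ℝ L, ∃ (φ : StrongDual ℝ Lv) (w μ : StrongDual ℝ L),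
      IsWDpair WG G φ w ∧ μ ∈ V ∧ f = w + μ) ↔
    (∃ C : ℝ, 0 < C ∧ ∀ u : ↥WG,
      (‖(u : L)‖ ^ p + ‖G u‖ ^ p) ^ (1 / p) ≤
        C * (semV V (u : L) ^ p + ‖G u‖ ^ p) ^ (1 / p)) := by
  rw [exists_rpow_add_rpow_le_iff hp.le (fun _ => norm_nonneg _) (fun _ => semV_nonneg _)
    (fun _ => norm_nonneg _)]
  exact ⟨exists_norm_le_of_forall_eq_add, fun ⟨_, hK⟩ => forall_eq_add_of_norm_le hreflL hVclosed hK⟩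

theorem surjectivity_of_D_iff_norm_equivalence
    [CompleteSpace L] [CompleteSpace Lv]
    [TopologicalSpace.SeparableSpace L] [TopologicalSpace.SeparableSpace Lv]
    (hreflL : Function.Surjective ⇑(inclusionInDoubleDual ℝ L))
    (hreflLv : Function.Surjective ⇑(inclusionInDoubleDual ℝ Lv))
    (WG : Submodule ℝ L) (hWGdense : Dense (WG : Set L))
    (G : ↥WG →ₗ[ℝ] Lv)
    (hGclosed : IsClosed (Set.range fun u : ↥WG => ((u : L), G u)))
    (p : ℝ) (hp : 1 < p)
    (p' : ℝ) (hpp' : 1 / p + 1 / p' = 1)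
    (V : Submodule ℝ (StrongDual ℝ L)) (hVclosed : IsClosed (V : Set (StrongDual ℝ L))) :
    (∀ f : StrongDual ℝ L, ∃ (φ : StrongDual ℝ Lv) (w μ : StrongDual ℝ L),
      IsWDpair WG G φ w ∧ μ ∈ V ∧ f = w + μ) ↔
    (∃ C : ℝ, 0 < C ∧ ∀ u : ↥WG,
      (‖(u : L)‖ ^ p + ‖G u‖ ^ p) ^ (1 / p) ≤
        C * (semV V (u : L) ^ p + ‖G u‖ ^ p) ^ (1 / p)) :=
  surjectivity_of_D_iff_norm_equivalence_general hreflL WG G p hp V hVclosed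
end
end

section
/- A sequence (𝒟_m)_{m∈ℕ} of gradient discretisations is consistent if and only if there exists a subset W̃_G of W_G, dense in W_G for the graph norm ‖·‖_{W_G,𝒢}, such that S_{𝒟_m}(ψ) → 0 as m → ∞ for every ψ ∈ W̃_G. -/
open NormedSpace Filter Topology

noncomputable section

variable {L Lv : Type*} [NormedAddCommGroup L] [NormedSpace ℝ L]
  [NormedAddCommGroup Lv] [NormedSpace ℝ Lv]

/-! The interpolation error `S_𝒟` is an infimum of distances, hence `2`-Lipschitz in `(φ, Gφ)`
uniformly in `𝒟`. An equicontinuous family that tends to `0` on a dense part of the graph of `G`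
tends to `0` on all of it, and graph-norm density of `W̃_G` is density in the graph. -/

namespace GradDisc

variable {V : Submodule ℝ (StrongDual ℝ L)} {p : ℝ} (D : GradDisc L Lv V p)

lemma SDdef_le_add (φ ψ : L) (gφ gψ : Lv) :
    D.SDdef φ gφ ≤ D.SDdef ψ gψ + (‖φ - ψ‖ + ‖gφ - gψ‖) := by
  rw [SDdef, SDdef, ← sub_le_iff_le_add]
  refine le_csInf (Set.range_nonempty _) ?_
  rintro _ ⟨v, rfl⟩
  rw [sub_le_iff_le_add]
  have hP := norm_sub_le_norm_sub_add_norm_sub (D.P v) ψ φ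
  have hG := norm_sub_le_norm_sub_add_norm_sub (D.Gd v) gψ gφ
  rw [norm_sub_rev ψ] at hP
  rw [norm_sub_rev gψ] at hG
  calc _ ≤ ‖D.P v - φ‖ + ‖D.Gd v - gφ‖ :=
        csInf_le (show BddBelow _ from ⟨0, by rintro _ ⟨w, rfl⟩; positivity⟩) (Set.mem_range_self v)
    _ ≤ _ := by linarith

lemma lipschitzWith_SDdef : LipschitzWith 2 fun x : L × Lv => D.SDdef x.1 x.2 :=
  LipschitzWith.of_le_add_mul 2 fun x y => by
    have h₁ := norm_fst_le (x - y)
    have h₂ := norm_snd_le (x - y)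
    rw [Prod.fst_sub] at h₁
    rw [Prod.snd_sub] at h₂
    rw [dist_eq_norm, NNReal.coe_two]
    linarith [D.SDdef_le_add x.1 y.1 x.2 y.2]

end GradDisc

lemma Real.le_rpow_add_rpow_one_div {a b p : ℝ} (ha : 0 ≤ a) (hb : 0 ≤ b) (hp : 0 < p) :
    a ≤ (a ^ p + b ^ p) ^ (1 / p) := by
  rw [one_div, Real.le_rpow_inv_iff_of_pos ha (by positivity) hp]
  exact le_add_of_nonneg_right (by positivity)

lemma Prod.dist_le_rpow_add_rpow_one_div {E F : Type*} [SeminormedAddCommGroup E]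
    [SeminormedAddCommGroup F] {p : ℝ} (hp : 0 < p) (x y : E × F) :
    dist x y ≤ (‖x.1 - y.1‖ ^ p + ‖x.2 - y.2‖ ^ p) ^ (1 / p) := by
  rw [Prod.dist_eq, dist_eq_norm, dist_eq_norm]
  refine max_le (Real.le_rpow_add_rpow_one_div (norm_nonneg _) (norm_nonneg _) hp) ?_
  rw [add_comm]
  exact Real.le_rpow_add_rpow_one_div (norm_nonneg _) (norm_nonneg _) hp

theorem consistent_iff_dense_subset_general
    (WG : Submodule ℝ L)
    (G : ↥WG →ₗ[ℝ] Lv)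
    (p : ℝ) (hp : 1 < p)
    (V : Submodule ℝ (StrongDual ℝ L))
    (D : ℕ → GradDisc L Lv V p) :
    Consistent WG G D ↔
      ∃ Wt : Set ↥WG,
        (∀ u : ↥WG, ∀ ε : ℝ, 0 < ε → ∃ v ∈ Wt,
          (‖(u : L) - (v : L)‖ ^ p + ‖G u - G v‖ ^ p) ^ (1 / p) < ε) ∧
        (∀ v ∈ Wt, Tendsto (fun m => (D m).SDdef (v : L) (G v)) atTop (𝓝 0)) := by
  have hp0 : 0 < p := zero_lt_one.trans hp
  let graph : ↥WG → L × Lv := fun u => ((u : L), G u)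
  constructor
  · intro hcons
    refine ⟨Set.univ, fun u ε hε => ⟨u, trivial, ?_⟩, fun v _ => hcons v⟩
    simpa [Real.zero_rpow hp0.ne', Real.zero_rpow (inv_ne_zero hp0.ne')] using hε
  · rintro ⟨Wt, hdense, hconv⟩ u
    have hu : graph u ∈ closure (graph '' Wt) := Metric.mem_closure_iff.2 fun ε hε => by
      obtain ⟨v, hv, huv⟩ := hdense u ε hε
      exact ⟨graph v, Set.mem_image_of_mem _ hv,
        (Prod.dist_le_rpow_add_rpow_one_div hp0 _ _).trans_lt huv⟩
    have hequi : Equicontinuous fun m (x : L × Lv) => (D m).SDdef x.1 x.2 :=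
      (LipschitzWith.uniformEquicontinuous _ 2 fun m => (D m).lipschitzWith_SDdef).equicontinuous
    refine (hequi (graph u)).tendsto_of_mem_closure (f := 0) tendsto_const_nhds ?_ hu
    rintro _ ⟨v, hv, rfl⟩
    exact hconv v hv

theorem consistent_iff_dense_subset
    [CompleteSpace L] [CompleteSpace Lv]
    [TopologicalSpace.SeparableSpace L] [TopologicalSpace.SeparableSpace Lv]
    (hreflL : Function.Surjective ⇑(inclusionInDoubleDual ℝ L))
    (hreflLv : Function.Surjective ⇑(inclusionInDoubleDual ℝ Lv))
    (WG : Submodule ℝ L) (hWGdense : Dense (WG : Set L))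
    (G : ↥WG →ₗ[ℝ] Lv)
    (hGclosed : IsClosed (Set.range fun u : ↥WG => ((u : L), G u)))
    (p : ℝ) (hp : 1 < p)
    (V : Submodule ℝ (StrongDual ℝ L)) (hVclosed : IsClosed (V : Set (StrongDual ℝ L)))
    (CWGV : ℝ) (hCWGV : 0 < CWGV)
    (hequiv : ∀ u : ↥WG, (‖(u : L)‖ ^ p + ‖G u‖ ^ p) ^ (1 / p) ≤
      CWGV * (semV V (u : L) ^ p + ‖G u‖ ^ p) ^ (1 / p))
    (D : ℕ → GradDisc L Lv V p) :
    Consistent WG G D ↔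
      ∃ Wt : Set ↥WG,
        (∀ u : ↥WG, ∀ ε : ℝ, 0 < ε → ∃ v ∈ Wt,
          (‖(u : L) - (v : L)‖ ^ p + ‖G u - G v‖ ^ p) ^ (1 / p) < ε) ∧
        (∀ v ∈ Wt, Tendsto (fun m => (D m).SDdef (v : L) (G v)) atTop (𝓝 0)) :=
  consistent_iff_dense_subset_general WG G p hp V D
end
end

section
/- Under the linear coercivity assumptions, there exists one and only one ū ∈ W_G such that, for all v ∈ W_G, ⟨𝐚(Gū), Gv⟩ + ⟨a(ū), v⟩ = ⟨f, v⟩ − ⟨𝐅, Gv⟩. -/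
open NormedSpace Filter Topology

noncomputable section

variable {L Lv : Type*} [NormedAddCommGroup L] [NormedSpace ℝ L]
  [NormedAddCommGroup Lv] [NormedSpace ℝ Lv]

/-!
The problem is a Lax–Milgram problem on the graph `Γ = {(u, G u) : u ∈ W_G}` of `G`, a closed
subspace of the reflexive Banach space `L × 𝐋`, hence itself a reflexive Banach space. On `Γ` the
form `((u, G u), (v, G v)) ↦ ⟨𝐚(G u), G v⟩ + ⟨a(u), v⟩` is bounded, and it is coercive because the
graph norm is controlled by the seminorm `‖·‖_{W_G}`, on which both operators are coercive.
A coercive operator `B : Γ → Γ'` is bounded below, so it is injective with closed range; a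
functional of `Γ''` vanishing on that range is, by reflexivity, evaluation at some `w` with
`⟨B w, w⟩ = 0`, so `w = 0` and the range is all of `Γ'`.
-/

open ContinuousLinearMap

namespace NormedSpace

def IsReflexive (E : Type*) [NormedAddCommGroup E] [NormedSpace ℝ E] : Prop :=
  Function.Surjective (inclusionInDoubleDual ℝ E)

end NormedSpace

section Reflexive

variable {E F : Type*} [NormedAddCommGroup E] [NormedSpace ℝ E]
  [NormedAddCommGroup F] [NormedSpace ℝ F]

theorem Submodule.exists_strongDual_eq_zero_of_notMem {Γ : Submodule ℝ E}
    (hΓ : IsClosed (Γ : Set E)) {e : E} (he : e ∉ Γ) :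
    ∃ φ : StrongDual ℝ E, (∀ x ∈ Γ, φ x = 0) ∧ φ e ≠ 0 := by
  obtain ⟨φ, u, hφΓ, hφe⟩ := geometric_hahn_banach_closed_point Γ.convex hΓ he
  have hu : 0 < u := by simpa using hφΓ 0 Γ.zero_mem
  refine ⟨φ, fun x hx => ?_, fun h => by linarith [h ▸ hφe]⟩
  -- a functional bounded above on a subspace vanishes on it
  by_contra hφx
  have := hφΓ ((2 * u / φ x) • x) (Γ.smul_mem _ hx)
  rw [map_smul, smul_eq_mul, div_mul_cancel₀ _ hφx] at this
  linarith

namespace NormedSpace.IsReflexive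

theorem prod (hE : IsReflexive E) (hF : IsReflexive F) : IsReflexive (E × F) := by
  intro ξ
  obtain ⟨x, hx⟩ := hE (ξ.comp (precomp ℝ (fst ℝ E F)))
  obtain ⟨y, hy⟩ := hF (ξ.comp (precomp ℝ (snd ℝ E F)))
  refine ⟨(x, y), ext fun ψ => ?_⟩
  have hx' := congr($hx (ψ.comp (inl ℝ E F)))
  have hy' := congr($hy (ψ.comp (inr ℝ E F)))
  simp only [dual_def, comp_apply, precomp_apply] at hx' hy'
  calc ψ (x, y) = ψ (inl ℝ E F x) + ψ (inr ℝ E F y) := by simp [← map_add]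
    _ = ξ ψ := by rw [hx', hy', ← map_add, comp_fst_add_comp_snd, coprod_comp_inl_inr]

theorem submodule (hE : IsReflexive E) {Γ : Submodule ℝ E} (hΓ : IsClosed (Γ : Set E)) :
    IsReflexive Γ := by
  intro ξ
  obtain ⟨e, he⟩ := hE (ξ.comp (precomp ℝ Γ.subtypeL))
  have heΓ : e ∈ Γ := by
    by_contra heΓ
    obtain ⟨φ, hφΓ, hφe⟩ := Submodule.exists_strongDual_eq_zero_of_notMem hΓ heΓ
    have hφ : φ.comp Γ.subtypeL = 0 := ext fun x => hφΓ x x.2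
    exact hφe (by simpa [hφ] using congr($he φ))
  refine ⟨⟨e, heΓ⟩, ext fun ψ => ?_⟩
  obtain ⟨Ψ, hΨ, -⟩ := exists_extension_norm_eq Γ ψ
  have hψ : Ψ.comp Γ.subtypeL = ψ := ext hΨ
  rw [dual_def, ← hΨ]
  simpa [hψ] using congr($he Ψ)

end NormedSpace.IsReflexive

namespace IsCoercive

variable {B : E →L[ℝ] E →L[ℝ] ℝ}

theorem exists_antilipschitzWith (hB : IsCoercive B) : ∃ K, AntilipschitzWith K B := by
  obtain ⟨C, hC, hBC⟩ := hB
  refine ⟨C⁻¹.toNNReal, B.antilipschitz_of_bound fun u => ?_⟩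
  rw [Real.coe_toNNReal _ (inv_nonneg.2 hC.le), ← div_eq_inv_mul, le_div_iff₀' hC]
  rcases (norm_nonneg u).eq_or_lt with hu | hu
  · simp [← hu]
  refine le_of_mul_le_mul_right ?_ hu
  calc C * ‖u‖ * ‖u‖ ≤ B u u := hBC u
    _ ≤ ‖B u‖ * ‖u‖ := (le_abs_self _).trans ((B u).le_opNorm u)

/-- Lax–Milgram in a reflexive Banach space. -/
theorem bijective_of_isReflexive [CompleteSpace E] (hE : IsReflexive E) (hB : IsCoercive B) :
    Function.Bijective B := by
  obtain ⟨K, hK⟩ := hB.exists_antilipschitzWith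
  refine ⟨hK.injective, fun ℓ => ?_⟩
  by_contra hℓ
  have hclosed : IsClosed (LinearMap.range (B : E →ₗ[ℝ] StrongDual ℝ E) : Set (StrongDual ℝ E)) :=
    hK.isClosed_range B.uniformContinuous
  obtain ⟨ξ, hξB, hξℓ⟩ :=
    Submodule.exists_strongDual_eq_zero_of_notMem hclosed (by simpa using hℓ)
  obtain ⟨w, rfl⟩ := hE ξ
  have hw : w = 0 := by
    obtain ⟨C, hC, hBC⟩ := hB
    have hBw : B w w = 0 := hξB _ (LinearMap.mem_range_self _ w)
    have hww : ‖w‖ * ‖w‖ = 0 := le_antisymm (by nlinarith [hBC w]) (by positivity)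
    exact norm_eq_zero.1 (mul_self_eq_zero.1 hww)
  simp [hw] at hξℓ

end IsCoercive

end Reflexive

theorem le_sq_mul_of_rpow_half_le {a b C : ℝ} (ha : 0 ≤ a) (hb : 0 ≤ b)
    (h : a ^ (1 / 2 : ℝ) ≤ C * b ^ (1 / 2 : ℝ)) : a ≤ C ^ 2 * b := by
  rw [← Real.sqrt_eq_rpow, ← Real.sqrt_eq_rpow] at h
  have := pow_le_pow_left₀ (Real.sqrt_nonneg a) h 2
  rwa [Real.sq_sqrt ha, mul_pow, Real.sq_sqrt hb] at this

theorem Prod.norm_sq_le {E F : Type*} [NormedAddCommGroup E] [NormedAddCommGroup F] (x : E × F) :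
    ‖x‖ ^ 2 ≤ ‖x.1‖ ^ 2 + ‖x.2‖ ^ 2 := by
  rcases le_total ‖x.1‖ ‖x.2‖ with h | h <;> simp [Prod.norm_def, h]

section Graph

variable (WG : Submodule ℝ L) (G : WG →ₗ[ℝ] Lv)

def opGraph : Submodule ℝ (L × Lv) :=
  LinearMap.range (WG.subtype.prod G)

def opGraphEquiv : WG ≃ₗ[ℝ] opGraph WG G :=
  LinearEquiv.ofInjective _ fun _ _ h => Subtype.ext congr(($h).1)

theorem isClosed_opGraph (hG : IsClosed (Set.range fun u : WG => ((u : L), G u))) :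
    IsClosed (opGraph WG G : Set (L × Lv)) := by
  rwa [opGraph, LinearMap.coe_range]

variable (aV : Lv →L[ℝ] StrongDual ℝ Lv) (aS : L →L[ℝ] StrongDual ℝ L)

def opGraphForm : opGraph WG G →L[ℝ] opGraph WG G →L[ℝ] ℝ :=
  aV.bilinearComp ((snd ℝ L Lv).comp (opGraph WG G).subtypeL)
      ((snd ℝ L Lv).comp (opGraph WG G).subtypeL) +
    aS.bilinearComp ((fst ℝ L Lv).comp (opGraph WG G).subtypeL)
      ((fst ℝ L Lv).comp (opGraph WG G).subtypeL)

theorem opGraphForm_opGraphEquiv (u v : WG) :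
    opGraphForm WG G aV aS (opGraphEquiv WG G u) (opGraphEquiv WG G v) =
      aV (G u) (G v) + aS u v := rfl

theorem isCoercive_opGraphForm (s : L → ℝ) {K α : ℝ} (hK : 0 < K) (hα : 0 < α)
    (hequiv : ∀ u : WG, ‖(u : L)‖ ^ 2 + ‖G u‖ ^ 2 ≤ K * (s u ^ 2 + ‖G u‖ ^ 2))
    (haV : ∀ g : Lv, α * ‖g‖ ^ 2 ≤ aV g g) (haS : ∀ v : L, α * s v ^ 2 ≤ aS v v) :
    IsCoercive (opGraphForm WG G aV aS) := by
  refine ⟨α / K, by positivity, (opGraphEquiv WG G).surjective.forall.2 fun u => ?_⟩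
  rw [opGraphForm_opGraphEquiv, mul_assoc, ← sq]
  calc α / K * ‖opGraphEquiv WG G u‖ ^ 2
      ≤ α / K * (K * (s u ^ 2 + ‖G u‖ ^ 2)) := by
        gcongr
        exact (Prod.norm_sq_le _).trans (hequiv u)
    _ = α * ‖G u‖ ^ 2 + α * s u ^ 2 := by field_simp; ring
    _ ≤ aV (G u) (G u) + aS u u := add_le_add (haV _) (haS _)

theorem opGraphForm_opGraphEquiv_eq_iff (f : StrongDual ℝ L) (F : StrongDual ℝ Lv) (u : WG) :
    opGraphForm WG G aV aS (opGraphEquiv WG G u) =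
        (f.comp (fst ℝ L Lv) - F.comp (snd ℝ L Lv)).comp (opGraph WG G).subtypeL ↔
      ∀ v : WG, aV (G u) (G v) + aS u v = f v - F (G v) := by
  rw [ContinuousLinearMap.ext_iff, (opGraphEquiv WG G).surjective.forall]
  rfl

end Graph

theorem linear_problem_existence_uniqueness_general
    [CompleteSpace L] [CompleteSpace Lv]
    (hreflL : Function.Surjective ⇑(inclusionInDoubleDual ℝ L))
    (hreflLv : Function.Surjective ⇑(inclusionInDoubleDual ℝ Lv))
    (WG : Submodule ℝ L)
    (G : ↥WG →ₗ[ℝ] Lv)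
    (hGclosed : IsClosed (Set.range fun u : ↥WG => ((u : L), G u)))
    (V : Submodule ℝ (StrongDual ℝ L))
    (CWGV : ℝ) (hCWGV : 0 < CWGV)
    (hequiv : ∀ u : ↥WG, (‖(u : L)‖ ^ (2:ℝ) + ‖G u‖ ^ (2:ℝ)) ^ (1/2 : ℝ) ≤
      CWGV * (semV V (u : L) ^ (2:ℝ) + ‖G u‖ ^ (2:ℝ)) ^ (1/2 : ℝ))
    (aV : Lv →L[ℝ] StrongDual ℝ Lv) (aS : L →L[ℝ] StrongDual ℝ L)
    (alph : ℝ) (halph : 0 < alph)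
    (haVcoer : ∀ gv : Lv, alph * ‖gv‖ ^ (2:ℝ) ≤ aV gv gv)
    (haScoer : ∀ v : L, alph * semV V v ^ (2:ℝ) ≤ aS v v)
    (f : StrongDual ℝ L) (F : StrongDual ℝ Lv) :
    ∃! ubar : ↥WG, ∀ v : ↥WG,
      aV (G ubar) (G v) + aS (ubar : L) (v : L) = f (v : L) - F (G v) := by
  simp only [Real.rpow_two] at hequiv haVcoer haScoer
  have hgraph : ∀ u : WG, ‖(u : L)‖ ^ 2 + ‖G u‖ ^ 2 ≤ CWGV ^ 2 * (semV V u ^ 2 + ‖G u‖ ^ 2) :=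
    fun u => le_sq_mul_of_rpow_half_le (by positivity) (by positivity) (hequiv u)
  have hclosed := isClosed_opGraph WG G hGclosed
  have : CompleteSpace (opGraph WG G) := hclosed.completeSpace_coe
  have hbij := (isCoercive_opGraphForm WG G aV aS (semV V) (by positivity) halph hgraph haVcoer
    haScoer).bijective_of_isReflexive ((IsReflexive.prod hreflL hreflLv).submodule hclosed)
  have hsol := hbij.existsUnique ((f.comp (fst ℝ L Lv) - F.comp (snd ℝ L Lv)).comp
    (opGraph WG G).subtypeL)
  rw [(opGraphEquiv WG G).bijective.existsUnique_iff] at hsol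
  simpa only [opGraphForm_opGraphEquiv_eq_iff] using hsol

theorem linear_problem_existence_uniqueness
    [CompleteSpace L] [CompleteSpace Lv]
    [TopologicalSpace.SeparableSpace L] [TopologicalSpace.SeparableSpace Lv]
    (hreflL : Function.Surjective ⇑(inclusionInDoubleDual ℝ L))
    (hreflLv : Function.Surjective ⇑(inclusionInDoubleDual ℝ Lv))
    (WG : Submodule ℝ L) (hWGdense : Dense (WG : Set L))
    (G : ↥WG →ₗ[ℝ] Lv)
    (hGclosed : IsClosed (Set.range fun u : ↥WG => ((u : L), G u)))
    (V : Submodule ℝ (StrongDual ℝ L)) (hVclosed : IsClosed (V : Set (StrongDual ℝ L)))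
    (CWGV : ℝ) (hCWGV : 0 < CWGV)
    (hequiv : ∀ u : ↥WG, (‖(u : L)‖ ^ (2:ℝ) + ‖G u‖ ^ (2:ℝ)) ^ (1/2 : ℝ) ≤
      CWGV * (semV V (u : L) ^ (2:ℝ) + ‖G u‖ ^ (2:ℝ)) ^ (1/2 : ℝ))
    (aV : Lv →L[ℝ] StrongDual ℝ Lv) (aS : L →L[ℝ] StrongDual ℝ L)
    (abar : ℝ) (haVnorm : ‖aV‖ ≤ abar) (haSnorm : ‖aS‖ ≤ abar)
    (alph : ℝ) (halph : 0 < alph)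
    (haVcoer : ∀ gv : Lv, alph * ‖gv‖ ^ (2:ℝ) ≤ aV gv gv)
    (haScoer : ∀ v : L, alph * semV V v ^ (2:ℝ) ≤ aS v v)
    (f : StrongDual ℝ L) (F : StrongDual ℝ Lv) :
    ∃! ubar : ↥WG, ∀ v : ↥WG,
      aV (G ubar) (G v) + aS (ubar : L) (v : L) = f (v : L) - F (G v) :=
  linear_problem_existence_uniqueness_general hreflL hreflLv WG G hGclosed V CWGV hCWGV hequiv aV aS
    alph halph haVcoer haScoer f F
end
end
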